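/- arXiv:2108.03303 — 2 statements merged into one kernel-verified Lean document; each statement's English description precedes it below -/
import Mathlib

section
/- Let L be a complete lattice, regarded as a complete meet-semilattice. Every element a ∈ L is either indispensable or a non-generator (with respect to complete-subsemilattice generation): if a is not a non-generator, then a belongs to every subset X ⊆ L with ⟨X⟩ = L. -/
/-- A complete subsemilattice of a complete lattice: a subset closed under
arbitrary infima computed in `L` (including the empty infimum, so it contains `⊤`). -/
def IsCompleteSubsemilattice {L : Type*} [CompleteLattice L] (S : Set L) : Prop :=
  ∀ Y : Set L, Y ⊆ S → sInf Y ∈ S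

/-- The complete subsemilattice generated by `X`: the intersection of all
complete subsemilattices containing `X`. -/
def semiGen {L : Type*} [CompleteLattice L] (X : Set L) : Set L :=
  ⋂₀ {S : Set L | IsCompleteSubsemilattice S ∧ X ⊆ S}

/-- `a` is a non-generator (w.r.t. complete-subsemilattice generation). -/
def IsSemiNonGenerator {L : Type*} [CompleteLattice L] (a : L) : Prop :=
  ∀ X : Set L, semiGen (X ∪ {a}) = Set.univ → semiGen X = Set.univ


lemma subset_semiGen {L : Type*} [CompleteLattice L] (X : Set L) : X ⊆ semiGen X :=
  fun x hx => Set.mem_sInter.2 fun _ hS => hS.2 hx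

lemma semiGen_isSub {L : Type*} [CompleteLattice L] (X : Set L) :
    IsCompleteSubsemilattice (semiGen X) := by
  intro Y hY
  refine Set.mem_sInter.2 fun S hS => ?_
  exact hS.1 Y fun y hy => Set.mem_sInter.1 (hY hy) S hS

lemma semiGen_min {L : Type*} [CompleteLattice L] {X S : Set L}
    (h1 : IsCompleteSubsemilattice S) (h2 : X ⊆ S) : semiGen X ⊆ S :=
  Set.sInter_subset_of_mem ⟨h1, h2⟩

lemma mem_semiGen_iff {L : Type*} [CompleteLattice L] {X : Set L} {b : L} :
    b ∈ semiGen X ↔ ∃ Y ⊆ X, sInf Y = b := by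
  constructor
  · intro hb
    have hsub : IsCompleteSubsemilattice {c : L | ∃ Y ⊆ X, sInf Y = c} := by
      intro Y hY
      have hY' : ∀ y, y ∈ Y → ∃ Z, Z ⊆ X ∧ sInf Z = y := fun y hy => hY hy
      choose! W hW1 hW2 using hY'
      refine ⟨⋃ y ∈ Y, W y, ?_, ?_⟩
      · intro z hz
        simp only [Set.mem_iUnion] at hz
        obtain ⟨y, hy, hzW⟩ := hz
        exact hW1 y hy hzW
      · apply le_antisymm
        · refine le_sInf fun y hy => ?_
          calc sInf (⋃ y ∈ Y, W y) ≤ sInf (W y) :=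
                sInf_le_sInf (Set.subset_biUnion_of_mem hy)
            _ = y := hW2 y hy
        · refine le_sInf fun z hz => ?_
          simp only [Set.mem_iUnion] at hz
          obtain ⟨y, hy, hzW⟩ := hz
          calc sInf Y ≤ y := sInf_le hy
            _ = sInf (W y) := (hW2 y hy).symm
            _ ≤ z := sInf_le hzW
    exact semiGen_min hsub (fun x hx => ⟨{x}, Set.singleton_subset_iff.2 hx, sInf_singleton⟩) hb
  · rintro ⟨Y, hYX, rfl⟩
    exact semiGen_isSub X Y fun y hy => subset_semiGen X (hYX hy)

/-- Every element of a complete (meet-)semilattice is either indispensable or a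
non-generator: if `a` is not a non-generator, then `a` belongs to every generating set. -/
theorem semi_indispensable_of_not_nonGenerator {L : Type*} [CompleteLattice L] (a : L)
    (h : ¬ IsSemiNonGenerator a) :
    ∀ X : Set L, semiGen X = Set.univ → a ∈ X := by
  intro X hX
  by_contra haX
  apply h
  intro Y hY
  -- First show `a ∈ semiGen Y`.
  have haU : a ∈ semiGen X := hX ▸ Set.mem_univ a
  obtain ⟨Z, hZX, hZa⟩ := mem_semiGen_iff.1 haU
  have hZY : Z ⊆ semiGen Y := by
    intro z hz
    have hzU : z ∈ semiGen (Y ∪ {a}) := hY ▸ Set.mem_univ z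
    obtain ⟨W, hWY, hWz⟩ := mem_semiGen_iff.1 hzU
    have haW : a ∉ W := by
      intro haW
      have h1 : z ≤ a := hWz ▸ sInf_le haW
      have h2 : a ≤ z := hZa ▸ sInf_le hz
      exact haX (le_antisymm h1 h2 ▸ hZX hz)
    have hWY' : W ⊆ Y := fun w hw => (hWY hw).resolve_right fun hwa => haW (hwa ▸ hw)
    exact mem_semiGen_iff.2 ⟨W, hWY', hWz⟩
  have haY : a ∈ semiGen Y := hZa ▸ semiGen_isSub Y Z hZY
  -- Then `semiGen Y` contains `Y ∪ {a}`, hence all of `semiGen (Y ∪ {a}) = univ`.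
  have : semiGen (Y ∪ {a}) ⊆ semiGen Y :=
    semiGen_min (semiGen_isSub Y)
      (Set.union_subset (subset_semiGen Y) (Set.singleton_subset_iff.2 haY))
  exact Set.eq_univ_of_univ_subset (hY ▸ this)
end

section
/- Let L₁ = (WithTop ℕ) × Bool with the componentwise lattice order. The intersection Φ of all maximal proper complete sublattices of L₁ equals {(0, false), (⊤, false), (⊤, true)}. In particular, Φ strictly contains the set Γ = {(0, false), (⊤, true)} of non-generators of L₁. -/
/-- A complete sublattice of a complete lattice: a subset closed under arbitrary
infima and suprema computed in `L` (including the empty ones, so it contains `⊤` and `⊥`). -/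
def IsCompleteSublattice {L : Type*} [CompleteLattice L] (S : Set L) : Prop :=
  (∀ Y : Set L, Y ⊆ S → sInf Y ∈ S) ∧ (∀ Y : Set L, Y ⊆ S → sSup Y ∈ S)

/-- The complete sublattice generated by `X`: the intersection of all complete
sublattices containing `X`. -/
def latGen {L : Type*} [CompleteLattice L] (X : Set L) : Set L :=
  ⋂₀ {S : Set L | IsCompleteSublattice S ∧ X ⊆ S}

/-- `a` is a non-generator (w.r.t. complete-sublattice generation). -/
def IsLatNonGenerator {L : Type*} [CompleteLattice L] (a : L) : Prop :=
  ∀ X : Set L, latGen (X ∪ {a}) = Set.univ → latGen X = Set.univ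

/-- A maximal proper complete sublattice. -/
def IsMaxProperSublattice {L : Type*} [CompleteLattice L] (P : Set L) : Prop :=
  IsCompleteSublattice P ∧ P ≠ Set.univ ∧
    ∀ Q : Set L, IsCompleteSublattice Q → Q ≠ Set.univ → P ⊆ Q → P = Q

variable {L : Type*} [CompleteLattice L]

lemma csl_bot {S : Set L} (h : IsCompleteSublattice S) : ⊥ ∈ S := by
  simpa using h.2 ∅ (by simp)

lemma csl_top {S : Set L} (h : IsCompleteSublattice S) : ⊤ ∈ S := by
  simpa using h.1 ∅ (by simp)

lemma csl_inf {S : Set L} (h : IsCompleteSublattice S) {a b : L} (ha : a ∈ S) (hb : b ∈ S) :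
    a ⊓ b ∈ S := by
  have := h.1 {a, b} (by intro x hx; rcases hx with rfl | rfl <;> assumption)
  simpa [sInf_pair] using this

lemma csl_sup {S : Set L} (h : IsCompleteSublattice S) {a b : L} (ha : a ∈ S) (hb : b ∈ S) :
    a ⊔ b ∈ S := by
  have := h.2 {a, b} (by intro x hx; rcases hx with rfl | rfl <;> assumption)
  simpa [sSup_pair] using this

lemma latGen_csl (X : Set L) : IsCompleteSublattice (latGen X) := by
  constructor
  · intro Y hY S hS
    exact hS.1.1 Y (fun y hy => hY hy S hS)
  · intro Y hY S hS
    exact hS.1.2 Y (fun y hy => hY hy S hS)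

lemma subset_latGen (X : Set L) : X ⊆ latGen X := fun x hx S hS => hS.2 hx

lemma latGen_subset {X S : Set L} (hS : IsCompleteSublattice S) (hX : X ⊆ S) :
    latGen X ⊆ S := fun x hx => hx S ⟨hS, hX⟩

lemma latGen_self {S : Set L} (hS : IsCompleteSublattice S) : latGen S = S :=
  le_antisymm (latGen_subset hS le_rfl) (subset_latGen S)

lemma latGen_mono {X Y : Set L} (h : X ⊆ Y) : latGen X ⊆ latGen Y :=
  fun x hx S hS => hx S ⟨hS.1, h.trans hS.2⟩

lemma nongen_of_mem_latGen {a : L} (h : ∀ X : Set L, a ∈ latGen X) : IsLatNonGenerator a := by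
  intro X hX
  have h1 : latGen (X ∪ {a}) ⊆ latGen X := by
    apply latGen_subset (latGen_csl X)
    rintro x (hx | rfl)
    · exact subset_latGen X hx
    · exact h X
  rw [← hX]
  exact le_antisymm (latGen_mono Set.subset_union_left) h1

lemma gen_of_not_mem_max {P : Set L} (hP : IsMaxProperSublattice P) {a : L} (ha : a ∉ P) :
    ¬ IsLatNonGenerator a := by
  intro hng
  have hPg : latGen P = P := latGen_self hP.1
  have : latGen (P ∪ {a}) = Set.univ := by
    by_contra hne
    have := hP.2.2 _ (latGen_csl _) hne
      ((Set.subset_union_left).trans (subset_latGen _))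
    exact ha (this ▸ subset_latGen (P ∪ {a}) (Set.mem_union_right _ rfl))
  have := hng P this
  rw [hPg] at this
  exact hP.2.1 this

-- Bool lemmas
lemma bool_sInf_false {S : Set Bool} (h : sInf S = false) : false ∈ S := by
  by_contra hf
  have : (true : Bool) ≤ sInf S := le_sInf (fun b hb => by
    cases b
    · exact absurd hb hf
    · exact le_rfl)
  rw [h] at this
  exact absurd this (by decide)

lemma bool_sSup_true {S : Set Bool} (h : sSup S = true) : true ∈ S := by
  by_contra hf
  have : sSup S ≤ (false : Bool) := sSup_le (fun b hb => by
    cases b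
    · exact le_rfl
    · exact absurd hb hf)
  rw [h] at this
  exact absurd this (by decide)

lemma bool_all_true {S : Set Bool} (h : sInf S = true) {b : Bool} (hb : b ∈ S) : b = true := by
  have := sInf_le hb
  rw [h] at this
  exact le_antisymm (by cases b <;> simp) this |>.symm ▸ (by
    cases b
    · exact absurd this (by decide)
    · rfl)

lemma bool_all_false {S : Set Bool} (h : sSup S = false) {b : Bool} (hb : b ∈ S) : b = false := by
  have := le_sSup hb
  rw [h] at this
  cases b
  · rfl
  · exact absurd this (by decide)

-- WithTop ℕ lemmas
lemma ntop_sInf_mem {S : Set (WithTop ℕ)} (h : sInf S ≠ ⊤) : sInf S ∈ S := by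
  obtain ⟨n, hn⟩ : ∃ n : ℕ, sInf S = (n : WithTop ℕ) := by
    cases hs : sInf S with
    | top => exact absurd hs h
    | coe n => exact ⟨n, rfl⟩
  have hlt : sInf S < ((n+1 : ℕ) : WithTop ℕ) := by
    rw [hn]; exact_mod_cast Nat.lt_succ_self n
  obtain ⟨a, haS, ha⟩ := sInf_lt_iff.mp hlt
  have hge : sInf S ≤ a := sInf_le haS
  cases a with
  | top => exact absurd ha (by simp)
  | coe m =>
    have h1 : n ≤ m := by rw [hn] at hge; exact WithTop.coe_le_coe.mp hge
    have h2 : m < n + 1 := WithTop.coe_lt_coe.mp ha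
    have : m = n := by omega
    rw [hn, ← this]; exact haS

lemma ntop_sSup_mem {S : Set (WithTop ℕ)} (h0 : sSup S ≠ 0) (ht : sSup S ≠ ⊤) : sSup S ∈ S := by
  obtain ⟨n, hn⟩ : ∃ n : ℕ, sSup S = (n : WithTop ℕ) := by
    cases hs : sSup S with
    | top => exact absurd hs ht
    | coe n => exact ⟨n, rfl⟩
  have hnz : n ≠ 0 := by rintro rfl; exact h0 (by exact_mod_cast hn)
  have hlt : ((n-1 : ℕ) : WithTop ℕ) < sSup S := by
    rw [hn]; exact_mod_cast Nat.sub_lt (Nat.pos_of_ne_zero hnz) one_pos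
  obtain ⟨a, haS, ha⟩ := lt_sSup_iff.mp hlt
  have hle : a ≤ sSup S := le_sSup haS
  cases a with
  | top => rw [hn] at hle; exact absurd hle (by simp)
  | coe m =>
    have h1 : m ≤ n := by rw [hn] at hle; exact WithTop.coe_le_coe.mp hle
    have h2 : n - 1 < m := WithTop.coe_lt_coe.mp ha
    have : m = n := by omega
    rw [hn, ← this]; exact haS

section Prod

variable {Y : Set (WithTop ℕ × Bool)}

lemma snd_sInf_false (hy : ∃ y ∈ Y, y.2 = false) : (sInf Y).2 = false := by
  rw [Prod.snd_sInf]
  obtain ⟨y, hy, h2⟩ := hy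
  have : sInf (Prod.snd '' Y) ≤ false := h2 ▸ sInf_le ⟨y, hy, rfl⟩
  exact le_antisymm this (by simp [Bool.le_iff_imp])

lemma snd_sInf_true (h : ∀ y ∈ Y, y.2 = true) : (sInf Y).2 = true := by
  rw [Prod.snd_sInf]
  have : (true : Bool) ≤ sInf (Prod.snd '' Y) :=
    le_sInf (by rintro b ⟨y, hy, rfl⟩; rw [h y hy])
  exact le_antisymm (by simp [Bool.le_iff_imp]) this

lemma snd_sSup_true (hy : ∃ y ∈ Y, y.2 = true) : (sSup Y).2 = true := by
  rw [Prod.snd_sSup]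
  obtain ⟨y, hy, h2⟩ := hy
  have : (true : Bool) ≤ sSup (Prod.snd '' Y) := h2 ▸ le_sSup ⟨y, hy, rfl⟩
  exact le_antisymm (by simp [Bool.le_iff_imp]) this

lemma snd_sSup_false (h : ∀ y ∈ Y, y.2 = false) : (sSup Y).2 = false := by
  rw [Prod.snd_sSup]
  have : sSup (Prod.snd '' Y) ≤ false :=
    sSup_le (by rintro b ⟨y, hy, rfl⟩; rw [h y hy])
  exact le_antisymm this (by simp [Bool.le_iff_imp])

lemma exists_snd_false (h : (sInf Y).2 = false) : ∃ y ∈ Y, y.2 = false := by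
  rw [Prod.snd_sInf] at h
  obtain ⟨y, hy, h2⟩ := bool_sInf_false h
  exact ⟨y, hy, h2⟩

lemma exists_snd_true (h : (sSup Y).2 = true) : ∃ y ∈ Y, y.2 = true := by
  rw [Prod.snd_sSup] at h
  obtain ⟨y, hy, h2⟩ := bool_sSup_true h
  exact ⟨y, hy, h2⟩

lemma fst_sInf_le {y : WithTop ℕ × Bool} (hy : y ∈ Y) : (sInf Y).1 ≤ y.1 := by
  rw [Prod.fst_sInf]; exact sInf_le ⟨y, hy, rfl⟩

lemma le_fst_sSup {y : WithTop ℕ × Bool} (hy : y ∈ Y) : y.1 ≤ (sSup Y).1 := by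
  rw [Prod.fst_sSup]; exact le_sSup ⟨y, hy, rfl⟩

lemma fst_sSup_le {c : WithTop ℕ} (h : ∀ y ∈ Y, y.1 ≤ c) : (sSup Y).1 ≤ c := by
  rw [Prod.fst_sSup]; exact sSup_le (by rintro a ⟨y, hy, rfl⟩; exact h y hy)

end Prod

section L1
open WithTop

lemma ntop_exists_fst_sInf {Y : Set (WithTop ℕ × Bool)} (h : (sInf Y).1 ≠ ⊤) :
    ∃ y ∈ Y, y.1 = (sInf Y).1 := by
  rw [Prod.fst_sInf] at h ⊢
  obtain ⟨y, hy, h1⟩ := ntop_sInf_mem h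
  exact ⟨y, hy, h1⟩

lemma ntop_exists_fst_sSup {Y : Set (WithTop ℕ × Bool)} (h0 : (sSup Y).1 ≠ 0)
    (ht : (sSup Y).1 ≠ ⊤) : ∃ y ∈ Y, y.1 = (sSup Y).1 := by
  rw [Prod.fst_sSup] at h0 ht ⊢
  obtain ⟨y, hy, h1⟩ := ntop_sSup_mem h0 ht
  exact ⟨y, hy, h1⟩

/-- `Q n`: complement of the "column" at finite `n`. -/
def Qset (n : ℕ) : Set (WithTop ℕ × Bool) := {x | x.1 ≠ (n : WithTop ℕ)}

lemma Qset_max {n : ℕ} (hn : 1 ≤ n) : IsMaxProperSublattice (Qset n) := by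
  have hcoe_ne_top : ((n : ℕ) : WithTop ℕ) ≠ ⊤ := WithTop.coe_ne_top
  have hcoe_ne_zero : ((n : ℕ) : WithTop ℕ) ≠ 0 := by
    intro h
    have : n = 0 := by exact_mod_cast h
    omega
  refine ⟨⟨?_, ?_⟩, ?_, ?_⟩
  · -- sInf closed
    intro Y hY hInf
    obtain ⟨y, hy, h1⟩ := ntop_exists_fst_sInf (hInf ▸ hcoe_ne_top)
    exact hY hy (h1.trans hInf)
  · -- sSup closed
    intro Y hY hSup
    obtain ⟨y, hy, h1⟩ := ntop_exists_fst_sSup (hSup ▸ hcoe_ne_zero) (hSup ▸ hcoe_ne_top)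
    exact hY hy (h1.trans hSup)
  · -- proper
    intro h
    have : (((n : ℕ) : WithTop ℕ), true) ∈ Qset n := h ▸ Set.mem_univ _
    exact this rfl
  · -- maximal
    intro Q hQ hQne hsub
    by_contra hne
    obtain ⟨x, hxQ, hxP⟩ : ∃ x, x ∈ Q ∧ x ∉ Qset n := by
      by_contra h
      push_neg at h
      exact hne (le_antisymm hsub (fun x hx => h x hx))
    have hx1 : x.1 = (n : WithTop ℕ) := not_not.mp hxP
    -- show both (n, false) and (n, true) are in Q
    have hfalse : ∀ x ∈ Q, x = (((n : ℕ) : WithTop ℕ), false) →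
        (((n : ℕ) : WithTop ℕ), true) ∈ Q := by
      intro x hxQ hx
      subst hx
      have h0 : ((0 : WithTop ℕ), true) ∈ Q := hsub (by
        simp only [Qset, Set.mem_setOf_eq]
        exact fun h => hcoe_ne_zero h.symm)
      have hm := csl_sup hQ hxQ h0
      have heq : ((((n : ℕ) : WithTop ℕ), false) : WithTop ℕ × Bool) ⊔ ((0 : WithTop ℕ), true)
          = (((n : ℕ) : WithTop ℕ), true) := by
        refine Prod.ext ?_ rfl
        simp
      rwa [heq] at hm
    have htrue : ∀ x ∈ Q, x = (((n : ℕ) : WithTop ℕ), true) →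
        (((n : ℕ) : WithTop ℕ), false) ∈ Q := by
      intro x hxQ hx
      subst hx
      have h1 : (((n + 1 : ℕ) : WithTop ℕ), false) ∈ Q := hsub (by
        simp only [Qset, Set.mem_setOf_eq]
        intro h
        have : n + 1 = n := by exact_mod_cast h
        omega)
      have hm := csl_inf hQ hxQ h1
      have heq : ((((n : ℕ) : WithTop ℕ), true) : WithTop ℕ × Bool) ⊓ (((n + 1 : ℕ) : WithTop ℕ), false)
          = (((n : ℕ) : WithTop ℕ), false) := by
        refine Prod.ext ?_ rfl
        show ((n : ℕ) : WithTop ℕ) ⊓ ((n + 1 : ℕ) : WithTop ℕ) = ((n : ℕ) : WithTop ℕ)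
        rw [inf_eq_left]
        exact_mod_cast Nat.le_succ n
      rwa [heq] at hm
    have hboth : (((n : ℕ) : WithTop ℕ), false) ∈ Q ∧ (((n : ℕ) : WithTop ℕ), true) ∈ Q := by
      rcases Bool.eq_false_or_eq_true x.2 with h2 | h2
      · -- x.2 = true
        have hx : x = (((n : ℕ) : WithTop ℕ), true) := Prod.ext hx1 h2
        exact ⟨htrue _ (hx ▸ hxQ) rfl, hx ▸ hxQ⟩
      · -- x.2 = false
        have hx : x = (((n : ℕ) : WithTop ℕ), false) := Prod.ext hx1 h2
        exact ⟨hx ▸ hxQ, hfalse _ (hx ▸ hxQ) rfl⟩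
    apply hQne
    apply Set.eq_univ_of_forall
    intro z
    by_cases hz : z.1 = (n : WithTop ℕ)
    · rcases Bool.eq_false_or_eq_true z.2 with h2 | h2
      · exact (Prod.ext hz h2 : z = (((n : ℕ) : WithTop ℕ), true)) ▸ hboth.2
      · exact (Prod.ext hz h2 : z = (((n : ℕ) : WithTop ℕ), false)) ▸ hboth.1
    · exact hsub hz

end L1

/-- `P₁`: complement of the singleton `(0, true)`. -/
def Pone : Set (WithTop ℕ × Bool) := {x | x ≠ ((0 : WithTop ℕ), true)}

lemma Pone_max : IsMaxProperSublattice Pone := by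
  refine ⟨⟨?_, ?_⟩, ?_, ?_⟩
  · -- sInf
    intro Y hY hInf
    have h1 : (sInf Y).1 = (0 : WithTop ℕ) := by rw [hInf]
    have h2 : (sInf Y).2 = true := by rw [hInf]
    have hall : ∀ y ∈ Y, y.2 = true := by
      intro y hy
      rcases Bool.eq_false_or_eq_true y.2 with h | h
      · exact h
      · rw [snd_sInf_false ⟨y, hy, h⟩] at h2; exact absurd h2 (by decide)
    obtain ⟨y, hy, hy1⟩ := ntop_exists_fst_sInf (Y := Y) (by
      rw [h1]; exact fun h => (by simp at h : False))
    have : y = ((0 : WithTop ℕ), true) := Prod.ext (hy1.trans h1) (hall y hy)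
    exact hY hy this
  · -- sSup
    intro Y hY hSup
    have h1 : (sSup Y).1 = (0 : WithTop ℕ) := by rw [hSup]
    have h2 : (sSup Y).2 = true := by rw [hSup]
    obtain ⟨y, hy, hy2⟩ := exists_snd_true h2
    have hy1 : y.1 = (0 : WithTop ℕ) := by
      have := le_fst_sSup hy
      rw [h1] at this
      exact le_bot_iff.mp this
    exact hY hy (Prod.ext hy1 hy2)
  · -- proper
    intro h
    exact (h ▸ Set.mem_univ ((0 : WithTop ℕ), true) : ((0 : WithTop ℕ), true) ∈ Pone) rfl
  · -- maximal
    intro Q hQ hQne hsub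
    by_contra hne
    obtain ⟨x, hxQ, hxP⟩ : ∃ x, x ∈ Q ∧ x ∉ Pone := by
      by_contra h
      push_neg at h
      exact hne (le_antisymm hsub (fun x hx => h x hx))
    have hx : x = ((0 : WithTop ℕ), true) := not_not.mp hxP
    apply hQne
    apply Set.eq_univ_of_forall
    intro z
    by_cases hz : z = ((0 : WithTop ℕ), true)
    · exact hz ▸ (hx ▸ hxQ)
    · exact hsub hz

/-- The "band" sublattices: all of the true column plus an initial segment of the false column. -/
lemma band_csl (m : ℕ) :
    IsCompleteSublattice {x : WithTop ℕ × Bool | x.2 = true ∨ x.1 ≤ ((m : ℕ) : WithTop ℕ)} := by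
  constructor
  · intro Y hY
    rcases Bool.eq_false_or_eq_true (sInf Y).2 with h | h
    · exact Or.inl h
    · obtain ⟨y, hy, hy2⟩ := exists_snd_false h
      have hy1 : y.1 ≤ ((m : ℕ) : WithTop ℕ) := by
        rcases hY hy with h' | h'
        · rw [hy2] at h'; exact absurd h' (by decide)
        · exact h'
      exact Or.inr ((fst_sInf_le hy).trans hy1)
  · intro Y hY
    rcases Bool.eq_false_or_eq_true (sSup Y).2 with h | h
    · exact Or.inl h
    · refine Or.inr (fst_sSup_le ?_)
      intro y hy
      rcases hY hy with h' | h'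
      · exfalso
        rw [snd_sSup_true ⟨y, hy, h'⟩] at h
        exact absurd h (by decide)
      · exact h'

lemma top_false_mem {P : Set (WithTop ℕ × Bool)} (hP : IsMaxProperSublattice P) :
    ((⊤ : WithTop ℕ), false) ∈ P := by
  by_contra htf
  obtain ⟨⟨hInf, hSup⟩, hne, hmax⟩ := hP
  set Y₀ : Set (WithTop ℕ × Bool) := {x ∈ P | x.2 = false} with hY₀def
  have hY₀ : Y₀ ⊆ P := fun y hy => hy.1
  have hs : sSup Y₀ ∈ P := hSup _ hY₀
  have hs2 : (sSup Y₀).2 = false := snd_sSup_false (fun y hy => hy.2)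
  have hsne : (sSup Y₀).1 ≠ ⊤ := by
    intro h
    exact htf ((Prod.ext h hs2 : sSup Y₀ = ((⊤ : WithTop ℕ), false)) ▸ hs)
  obtain ⟨m, hm⟩ : ∃ m : ℕ, (sSup Y₀).1 = ((m : ℕ) : WithTop ℕ) := by
    cases h : (sSup Y₀).1 with
    | top => exact absurd h hsne
    | coe m => exact ⟨m, rfl⟩
  set R := {x : WithTop ℕ × Bool | x.2 = true ∨ x.1 ≤ ((m + 1 : ℕ) : WithTop ℕ)} with hRdef
  have hRcs : IsCompleteSublattice R := band_csl (m + 1)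
  have hRne : R ≠ Set.univ := by
    intro h
    have hmem2 : (((m + 2 : ℕ) : WithTop ℕ), false) ∈ R := h ▸ Set.mem_univ _
    rcases hmem2 with h' | h'
    · simp at h'
    · have : m + 2 ≤ m + 1 := WithTop.coe_le_coe.mp h'
      omega
  have hPR : P ⊆ R := by
    intro x hx
    rcases Bool.eq_false_or_eq_true x.2 with h | h
    · exact Or.inl h
    · refine Or.inr ?_
      have : x ∈ Y₀ := ⟨hx, h⟩
      have h1 : x.1 ≤ (sSup Y₀).1 := le_fst_sSup this
      rw [hm] at h1
      exact h1.trans (WithTop.coe_le_coe.mpr (Nat.le_succ m))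
  have hPeq : P = R := hmax R hRcs hRne hPR
  have hmem : (((m + 1 : ℕ) : WithTop ℕ), false) ∈ R := Or.inr le_rfl
  rw [← hPeq] at hmem
  have hY0mem : (((m + 1 : ℕ) : WithTop ℕ), false) ∈ Y₀ := ⟨hmem, rfl⟩
  have h1 := le_fst_sSup hY0mem
  rw [hm] at h1
  have : m + 1 ≤ m := WithTop.coe_le_coe.mp h1
  omega

lemma topfalse_gen : ¬ IsLatNonGenerator ((⊤ : WithTop ℕ), false) := by
  intro hng
  have h1 : latGen ({x : WithTop ℕ × Bool | x.2 = true} ∪ {((⊤ : WithTop ℕ), false)})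
      = Set.univ := by
    apply Set.eq_univ_of_forall
    intro z S hS
    obtain ⟨hScs, hSsub⟩ := hS
    have htr : (z.1, true) ∈ S := hSsub (Or.inl rfl)
    have htf : ((⊤ : WithTop ℕ), false) ∈ S := hSsub (Or.inr rfl)
    rcases Bool.eq_false_or_eq_true z.2 with h | h
    · have hz : z = (z.1, true) := Prod.ext rfl h
      rw [hz]; exact htr
    · have hm := csl_inf hScs htf htr
      have hz : ((⊤ : WithTop ℕ), false) ⊓ (z.1, true) = z := by
        refine Prod.ext ?_ ?_
        · show ⊤ ⊓ z.1 = z.1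
          simp
        · show false ⊓ true = z.2
          rw [h]
          decide
      rw [← hz]; exact hm
  have h2 := hng _ h1
  have hS₀ : IsCompleteSublattice {x : WithTop ℕ × Bool | x.2 = true ∨ x = ⊥} := by
    constructor
    · intro Y hY
      rcases Bool.eq_false_or_eq_true (sInf Y).2 with h | h
      · exact Or.inl h
      · obtain ⟨y, hy, hy2⟩ := exists_snd_false h
        have hyb : y = ⊥ := by
          rcases hY hy with h' | h'
          · rw [hy2] at h'; exact absurd h' (by decide)
          · exact h'
        refine Or.inr (le_bot_iff.mp ?_)
        have := sInf_le hy
        rwa [hyb] at this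
    · intro Y hY
      rcases Bool.eq_false_or_eq_true (sSup Y).2 with h | h
      · exact Or.inl h
      · refine Or.inr (le_bot_iff.mp (sSup_le ?_))
        intro y hy
        rcases hY hy with h' | h'
        · exfalso
          rw [snd_sSup_true ⟨y, hy, h'⟩] at h
          exact absurd h (by decide)
        · exact h'.le
  have h3 : latGen {x : WithTop ℕ × Bool | x.2 = true}
      ⊆ {x : WithTop ℕ × Bool | x.2 = true ∨ x = ⊥} :=
    latGen_subset hS₀ (fun x hx => Or.inl hx)
  rw [h2] at h3
  have := h3 (Set.mem_univ ((⊤ : WithTop ℕ), false))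
  rcases this with h | h
  · exact absurd h (by decide)
  · have : (⊤ : WithTop ℕ) = (0 : WithTop ℕ) := congrArg Prod.fst h
    simp at this

lemma nongen_char :
    {a : WithTop ℕ × Bool | IsLatNonGenerator a} =
      ({((0 : WithTop ℕ), false), ((⊤ : WithTop ℕ), true)} : Set (WithTop ℕ × Bool)) := by
  ext x
  obtain ⟨c, b⟩ := x
  simp only [Set.mem_setOf_eq, Set.mem_insert_iff, Set.mem_singleton_iff]
  constructor
  · intro h
    cases c with
    | top =>
      rcases Bool.eq_false_or_eq_true b with hb | hb
      · subst hb
        right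
        rfl
      · subst hb
        exact absurd h topfalse_gen
    | coe n =>
      match n with
      | 0 =>
        rcases Bool.eq_false_or_eq_true b with hb | hb
        · subst hb
          exfalso
          refine gen_of_not_mem_max Pone_max ?_ h
          intro hp
          exact hp (Prod.ext (by norm_num) rfl)
        · subst hb
          left
          refine Prod.ext ?_ rfl
          norm_num
      | Nat.succ k =>
        exfalso
        refine gen_of_not_mem_max (Qset_max (Nat.succ_le_succ (Nat.zero_le k))) ?_ h
        exact not_not.mpr rfl
  · rintro (h | h)
    · rw [h]
      exact nongen_of_mem_latGen (fun X => csl_bot (latGen_csl X))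
    · rw [h]
      exact nongen_of_mem_latGen (fun X => csl_top (latGen_csl X))

lemma Phi_eq :
    ⋂₀ {P : Set (WithTop ℕ × Bool) | IsMaxProperSublattice P} =
      ({((0 : WithTop ℕ), false), ((⊤ : WithTop ℕ), false), ((⊤ : WithTop ℕ), true)} :
        Set (WithTop ℕ × Bool)) := by
  ext x
  simp only [Set.mem_sInter, Set.mem_setOf_eq, Set.mem_insert_iff, Set.mem_singleton_iff]
  constructor
  · intro hx
    obtain ⟨c, b⟩ := x
    cases c with
    | top =>
      rcases Bool.eq_false_or_eq_true b with hb | hb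
      · subst hb; right; right; rfl
      · subst hb; right; left; rfl
    | coe n =>
      match n with
      | 0 =>
        rcases Bool.eq_false_or_eq_true b with hb | hb
        · subst hb
          exfalso
          have := hx Pone Pone_max
          exact this (Prod.ext (by norm_num) rfl)
        · subst hb
          left
          exact Prod.ext (by norm_num) rfl
      | Nat.succ k =>
        exfalso
        have := hx (Qset (k + 1)) (Qset_max (Nat.succ_le_succ (Nat.zero_le k)))
        exact this rfl
  · rintro (h | h | h) P hP
    · rw [h]; exact csl_bot hP.1
    · rw [h]; exact top_false_mem hP
    · rw [h]; exact csl_top hP.1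

/-- In `L₁ = (WithTop ℕ) × Bool`, the intersection `Φ` of all maximal proper complete
sublattices equals `{(0, false), (⊤, false), (⊤, true)}`; in particular it strictly
contains the set `Γ = {(0, false), (⊤, true)}` of non-generators. -/
theorem sInter_maxProper_L1 :
    ⋂₀ {P : Set (WithTop ℕ × Bool) | IsMaxProperSublattice P} =
      ({((0 : WithTop ℕ), false), ((⊤ : WithTop ℕ), false), ((⊤ : WithTop ℕ), true)} :
        Set (WithTop ℕ × Bool)) ∧
    ({((0 : WithTop ℕ), false), ((⊤ : WithTop ℕ), true)} : Set (WithTop ℕ × Bool)) ⊂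
      ⋂₀ {P : Set (WithTop ℕ × Bool) | IsMaxProperSublattice P} ∧
    {a : WithTop ℕ × Bool | IsLatNonGenerator a} =
      ({((0 : WithTop ℕ), false), ((⊤ : WithTop ℕ), true)} : Set (WithTop ℕ × Bool)) := by
  refine ⟨Phi_eq, ?_, nongen_char⟩
  rw [Phi_eq]
  rw [Set.ssubset_iff_subset_ne]
  constructor
  · intro x hx
    rcases hx with h | h
    · exact Or.inl h
    · exact Or.inr (Or.inr h)
  · intro h
    have : ((⊤ : WithTop ℕ), false) ∈
        ({((0 : WithTop ℕ), false), ((⊤ : WithTop ℕ), true)} : Set (WithTop ℕ × Bool)) := by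
      rw [h]; right; left; rfl
    rcases this with h' | h'
    · have : (⊤ : WithTop ℕ) = (0 : WithTop ℕ) := congrArg Prod.fst h'
      simp at this
    · have : false = true := congrArg Prod.snd h'
      simp at this
end
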